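/- arXiv:1106.3156 — 3 statements merged into one kernel-verified Lean document; each statement's English description precedes it below -/
import Mathlib

section
/- Let G be a compact metrizable topological group and 𝒱 an open neighborhood of the identity in G. Then there exists a positive integer m such that every closed subgroup K of G can be covered by m left-translates of 𝒱 by elements of K, i.e., there exist k₁, …, k_m ∈ K with K ⊆ ⋃ᵢ kᵢ𝒱. -/
open scoped Pointwise

open Filter Set Topology

/-! Cover the compact group `G` by finitely many translates `(g * ·) ⁻¹' U`, where
`a⁻¹ * b ∈ 𝒱` for all `a b ∈ U`; their number `m` does not depend on `K`. Each translate that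
meets a subgroup `K` lies, on `K`, inside `k • 𝒱` for any point `k` of `K` it contains, and
the translates missing `K` are assigned `k = 1`. -/

theorem exists_nhds_one_inv_mul_mem {G : Type*} [Group G] [TopologicalSpace G]
    [IsTopologicalGroup G] {s : Set G} (hs : s ∈ 𝓝 1) :
    ∃ U ∈ 𝓝 (1 : G), ∀ a ∈ U, ∀ b ∈ U, a⁻¹ * b ∈ s := by
  have h : Tendsto (fun p : G × G => p.1⁻¹ * p.2) (𝓝 1 ×ˢ 𝓝 1) (𝓝 1) := by
    simpa [nhds_prod_eq] using
      (by fun_prop : Continuous fun p : G × G => p.1⁻¹ * p.2).tendsto ((1 : G), (1 : G))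
  exact eventually_prod_self_iff.1 (h hs)

theorem exists_mem_inter_subset_smul {G : Type*} [Group G] {S W V : Set G} (hS : S.Nonempty)
    (hW : ∀ a ∈ W, ∀ b ∈ W, a⁻¹ * b ∈ V) : ∃ k ∈ S, S ∩ W ⊆ k • V := by
  rcases (S ∩ W).eq_empty_or_nonempty with hSW | ⟨k, hkS, hkW⟩
  · obtain ⟨a, ha⟩ := hS
    exact ⟨a, ha, hSW ▸ empty_subset _⟩
  · refine ⟨k, hkS, fun x hx => ?_⟩
    rw [mem_smul_set_iff_inv_smul_mem, smul_eq_mul]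
    exact hW k hkW x hx.2

theorem stmt_1_general {G : Type*} [Group G] [TopologicalSpace G] [IsTopologicalGroup G]
    [CompactSpace G]
    (𝒱 : Set G) (h𝒱 : IsOpen 𝒱) (h1 : (1 : G) ∈ 𝒱) :
    ∃ m : ℕ, 0 < m ∧ ∀ K : Subgroup G, IsClosed (K : Set G) →
      ∃ k : Fin m → G, (∀ i, k i ∈ K) ∧ (K : Set G) ⊆ ⋃ i, k i • 𝒱 := by
  obtain ⟨U, hU, hU𝒱⟩ := exists_nhds_one_inv_mul_mem (h𝒱.mem_nhds h1)
  obtain ⟨t, ht⟩ := compact_covered_by_mul_left_translates isCompact_univ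
    ⟨1, mem_interior_iff_mem_nhds.2 hU⟩
  have hcover : ∀ x : G, ∃ g ∈ t, x ∈ (g * ·) ⁻¹' U := fun x => by
    simpa using ht (mem_univ x)
  have htne : t.Nonempty := by
    obtain ⟨g, hg, -⟩ := hcover 1
    exact ⟨g, hg⟩
  refine ⟨t.card, t.card_pos.2 htne, fun K _ => ?_⟩
  have hW : ∀ g : G, ∀ a ∈ (g * ·) ⁻¹' U, ∀ b ∈ (g * ·) ⁻¹' U, a⁻¹ * b ∈ 𝒱 :=
    fun g a ha b hb => by simpa [mul_assoc] using hU𝒱 _ ha _ hb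
  choose f hfK hf using fun g : G =>
    exists_mem_inter_subset_smul ⟨1, K.one_mem⟩ (hW g)
  refine ⟨fun i => f (t.equivFin.symm i), fun i => hfK _, fun x hx => ?_⟩
  obtain ⟨g, hg, hxg⟩ := hcover x
  exact mem_iUnion.2 ⟨t.equivFin ⟨g, hg⟩, by simpa using hf g ⟨hx, hxg⟩⟩

/-- Let `G` be a compact metrizable topological group and `𝒱` an open
neighborhood of the identity. Then there is `m ≥ 1` such that every closed subgroup `K`
of `G` is covered by `m` left-translates of `𝒱` by elements of `K`. -/
theorem stmt_1 {G : Type*} [Group G] [TopologicalSpace G] [IsTopologicalGroup G]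
    [CompactSpace G] [TopologicalSpace.MetrizableSpace G]
    (𝒱 : Set G) (h𝒱 : IsOpen 𝒱) (h1 : (1 : G) ∈ 𝒱) :
    ∃ m : ℕ, 0 < m ∧ ∀ K : Subgroup G, IsClosed (K : Set G) →
      ∃ k : Fin m → G, (∀ i, k i ∈ K) ∧ (K : Set G) ⊆ ⋃ i, k i • 𝒱 :=
  stmt_1_general 𝒱 h𝒱 h1
end

section
/- Let Ω be a bounded open convex subset of ℝⁿ. The Hilbert distance d_Ω(x,y) = ½ log([a:b:x:y]) for x ≠ y (with d_Ω(x,x) = 0) defines a metric on Ω: it is symmetric, positive for distinct points, and satisfies the triangle inequality. -/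
open Metric

noncomputable section
open scoped Classical

variable {E : Type*} [NormedAddCommGroup E] [NormedSpace ℝ E]

/-- Parameter of the boundary point `a` of the chord through `x, y` lying beyond `y`
(so that `y` is between `x` and `a`). -/
def chordSup (Ω : Set E) (x y : E) : ℝ := sSup {t : ℝ | x + t • (y - x) ∈ Ω}

/-- Parameter of the boundary point `b` of the chord through `x, y` lying behind `x`
(so that `x` is between `b` and `y`). -/
def chordInf (Ω : Set E) (x y : E) : ℝ := sInf {t : ℝ | x + t • (y - x) ∈ Ω}

/-- The boundary point `a` of the chord through `x, y`, with `y` between `x` and `a`. -/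
def chordA (Ω : Set E) (x y : E) : E := x + chordSup Ω x y • (y - x)

/-- The boundary point `b` of the chord through `x, y`, with `x` between `b` and `y`. -/
def chordB (Ω : Set E) (x y : E) : E := x + chordInf Ω x y • (y - x)

/-- The Hilbert distance on a bounded convex open set `Ω`:
`d_Ω(x,y) = ½ log [a:b:x:y]` where `[a:b:x:y] = (‖a-x‖‖b-y‖)/(‖a-y‖‖b-x‖)`. -/
def hilbertDist (Ω : Set E) (x y : E) : ℝ :=
  if x = y then 0 else
    (1 / 2) * Real.log ((dist (chordA Ω x y) x * dist (chordB Ω x y) y) /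
      (dist (chordA Ω x y) y * dist (chordB Ω x y) x))


/-!
The Hilbert distance is the symmetrization `½ (F(x,y) + F(y,x))` of the Funk weak metric
`F(x,y) = log (T / (T - 1))`, where `x + T • (y - x)` is the boundary point of the chord beyond `y`.
As `y` is an interior point, `T > 1` and `F(x,y) > 0`. For the triangle inequality let
`T₁, T₂, T₃` be the parameters of the boundary points `a(x,y)`, `a(y,z)`, `a(x,z)`. The segment
from `a(x,y)` to `a(y,z)` lies in `closure Ω` and crosses the ray from `x` through `z` at
parameter `u = T₁ T₂ / (T₁ + T₂ - 1)`, so `u ≤ T₃`. Since `t ↦ t / (t - 1)` decreases on `(1, ∞)`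
and `u / (u - 1) = T₁ / (T₁ - 1) * (T₂ / (T₂ - 1))`, this gives `F(x,z) ≤ F(x,y) + F(y,z)`.
-/

open Set Filter Topology AffineMap

section OpenSet

variable {α : Type*} [ConditionallyCompleteLattice α] [TopologicalSpace α] {S : Set α} {a : α}

theorem IsOpen.lt_csSup [(𝓝[>] a).NeBot] (hS : IsOpen S) (hbdd : BddAbove S) (ha : a ∈ S) :
    a < sSup S := by
  obtain ⟨b, hab, hb⟩ := (hS.eventually_mem ha).exists_gt
  exact hab.trans_le (le_csSup hbdd hb)

theorem IsOpen.csInf_lt [(𝓝[<] a).NeBot] (hS : IsOpen S) (hbdd : BddBelow S) (ha : a ∈ S) :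
    sInf S < a := by
  obtain ⟨b, hba, hb⟩ := (hS.eventually_mem ha).exists_lt
  exact (csInf_le hbdd hb).trans_lt hba

end OpenSet

noncomputable section

variable {E : Type*} [NormedAddCommGroup E] [NormedSpace ℝ E] {Ω : Set E} {x y z : E}

def chordParams (Ω : Set E) (x y : E) : Set ℝ := {t : ℝ | x + t • (y - x) ∈ Ω}

theorem chordParams_eq_preimage : chordParams Ω x y = lineMap x y ⁻¹' Ω := by
  ext t
  rw [mem_preimage, lineMap_apply_module', add_comm]
  rfl

theorem zero_mem_chordParams (hx : x ∈ Ω) : (0 : ℝ) ∈ chordParams Ω x y := by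
  simpa [chordParams] using hx

theorem one_mem_chordParams (hy : y ∈ Ω) : (1 : ℝ) ∈ chordParams Ω x y := by
  simpa [chordParams] using hy

theorem chordA_eq_lineMap : chordA Ω x y = lineMap x y (chordSup Ω x y) := by
  rw [chordA, lineMap_apply_module', add_comm]

theorem chordB_eq_lineMap : chordB Ω x y = lineMap x y (chordInf Ω x y) := by
  rw [chordB, lineMap_apply_module', add_comm]

theorem isOpen_chordParams (hopen : IsOpen Ω) : IsOpen (chordParams Ω x y) := by
  rw [chordParams_eq_preimage]
  exact hopen.preimage lineMap_continuous

theorem isBounded_chordParams (hbdd : Bornology.IsBounded Ω) (hxy : x ≠ y) :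
    Bornology.IsBounded (chordParams Ω x y) := by
  obtain ⟨C, hC⟩ := Metric.isBounded_iff.1 hbdd
  refine Metric.isBounded_iff.2 ⟨C / dist x y, fun s hs t ht => ?_⟩
  rw [le_div_iff₀ (dist_pos.2 hxy), ← dist_lineMap_lineMap]
  rw [chordParams_eq_preimage] at hs ht
  exact hC hs ht

theorem chordParams_swap : chordParams Ω y x = (fun t => 1 - t) '' chordParams Ω x y := by
  rw [image_eq_preimage_of_inverse (fun t => sub_sub_cancel 1 t) (fun t => sub_sub_cancel 1 t),
    chordParams_eq_preimage, chordParams_eq_preimage, ← preimage_comp]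
  congr 1
  ext t
  exact (lineMap_apply_one_sub x y t).symm

theorem chordSup_swap (hbdd : Bornology.IsBounded Ω) (hx : x ∈ Ω) (hxy : x ≠ y) :
    chordSup Ω y x = 1 - chordInf Ω x y := by
  calc chordSup Ω y x = sSup ((fun t => 1 - t) '' chordParams Ω x y) := by
        rw [← chordParams_swap]; rfl
    _ = 1 - chordInf Ω x y :=
        (Antitone.map_csInf_of_continuousAt (by fun_prop) (fun _ _ h => sub_le_sub_left h 1)
          ⟨0, zero_mem_chordParams hx⟩ (isBounded_chordParams hbdd hxy).bddBelow).symm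

theorem one_lt_chordSup (hopen : IsOpen Ω) (hbdd : Bornology.IsBounded Ω) (hy : y ∈ Ω)
    (hxy : x ≠ y) : 1 < chordSup Ω x y :=
  (isOpen_chordParams hopen).lt_csSup (isBounded_chordParams hbdd hxy).bddAbove
    (one_mem_chordParams hy)

theorem chordInf_neg (hopen : IsOpen Ω) (hbdd : Bornology.IsBounded Ω) (hx : x ∈ Ω)
    (hxy : x ≠ y) : chordInf Ω x y < 0 :=
  (isOpen_chordParams hopen).csInf_lt (isBounded_chordParams hbdd hxy).bddBelow
    (zero_mem_chordParams hx)

theorem chordA_mem_closure (hbdd : Bornology.IsBounded Ω) (hx : x ∈ Ω) (hxy : x ≠ y) :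
    chordA Ω x y ∈ closure Ω := by
  have hsup : chordSup Ω x y ∈ closure (chordParams Ω x y) :=
    csSup_mem_closure ⟨0, zero_mem_chordParams hx⟩ (isBounded_chordParams hbdd hxy).bddAbove
  rw [chordParams_eq_preimage] at hsup
  rw [chordA_eq_lineMap]
  exact map_mem_closure lineMap_continuous hsup (mapsTo_preimage _ _)

theorem le_chordSup_of_lineMap_mem_closure (hopen : IsOpen Ω) (hconv : Convex ℝ Ω)
    (hbdd : Bornology.IsBounded Ω) (hx : x ∈ Ω) (hxy : x ≠ y) {u : ℝ} (hu : 0 < u)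
    (hmem : lineMap x y u ∈ closure Ω) : u ≤ chordSup Ω x y := by
  have hsub : Ico 0 u ⊆ chordParams Ω x y := by
    rintro t ⟨ht0, htu⟩
    rw [chordParams_eq_preimage, mem_preimage, ← hopen.interior_eq]
    have hcombo := hconv.combo_interior_closure_mem_interior (hopen.interior_eq.symm ▸ hx) hmem
      (a := 1 - t / u) (b := t / u) (by rw [sub_pos, div_lt_one hu]; exact htu) (by positivity)
      (by ring)
    convert hcombo using 1
    simp only [lineMap_apply_module]
    match_scalars
    · field_simp
      ring
    · field_simp
  calc u = sSup (Ico 0 u) := (csSup_Ico hu).symm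
    _ ≤ chordSup Ω x y :=
      csSup_le_csSup (isBounded_chordParams hbdd hxy).bddAbove (nonempty_Ico.2 hu) hsub

theorem mul_div_le_chordSup (hopen : IsOpen Ω) (hconv : Convex ℝ Ω)
    (hbdd : Bornology.IsBounded Ω) (hx : x ∈ Ω) (hy : y ∈ Ω) (hz : z ∈ Ω)
    (hxy : x ≠ y) (hyz : y ≠ z) (hxz : x ≠ z) :
    chordSup Ω x y * chordSup Ω y z / (chordSup Ω x y + chordSup Ω y z - 1) ≤
      chordSup Ω x z := by
  have h₁ := one_lt_chordSup hopen hbdd hy hxy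
  have h₂ := one_lt_chordSup hopen hbdd hz hyz
  set T₁ := chordSup Ω x y
  set T₂ := chordSup Ω y z
  have hD : 0 < T₁ + T₂ - 1 := by linarith
  have hcomb : lineMap x z (T₁ * T₂ / (T₁ + T₂ - 1)) =
      ((T₂ - 1) / (T₁ + T₂ - 1)) • chordA Ω x y +
        (T₁ / (T₁ + T₂ - 1)) • chordA Ω y z := by
    rw [chordA, chordA, lineMap_apply_module']
    match_scalars <;> field_simp <;> ring
  refine le_chordSup_of_lineMap_mem_closure hopen hconv hbdd hx hxz
    (div_pos (by positivity) hD) ?_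
  rw [hcomb]
  exact hconv.closure (chordA_mem_closure hbdd hx hxy) (chordA_mem_closure hbdd hy hyz)
    (div_pos (by linarith) hD).le (div_pos (by linarith) hD).le (by field_simp; ring)

open scoped Classical in
def funkDist (Ω : Set E) (x y : E) : ℝ :=
  if x = y then 0 else Real.log (chordSup Ω x y / (chordSup Ω x y - 1))

theorem funkDist_of_ne (hxy : x ≠ y) :
    funkDist Ω x y = Real.log (chordSup Ω x y / (chordSup Ω x y - 1)) :=
  if_neg hxy

@[simp]
theorem funkDist_self : funkDist Ω x x = 0 :=
  if_pos rfl

theorem funkDist_pos (hopen : IsOpen Ω) (hbdd : Bornology.IsBounded Ω) (hy : y ∈ Ω)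
    (hxy : x ≠ y) : 0 < funkDist Ω x y := by
  have hT := one_lt_chordSup hopen hbdd hy hxy
  rw [funkDist_of_ne hxy]
  exact Real.log_pos ((one_lt_div (by linarith)).2 (by linarith))

theorem funkDist_nonneg (hopen : IsOpen Ω) (hbdd : Bornology.IsBounded Ω) (hy : y ∈ Ω) :
    0 ≤ funkDist Ω x y := by
  by_cases hxy : x = y
  · rw [hxy, funkDist_self]
  · exact (funkDist_pos hopen hbdd hy hxy).le

theorem funkDist_triangle_of_ne (hopen : IsOpen Ω) (hconv : Convex ℝ Ω)
    (hbdd : Bornology.IsBounded Ω) (hx : x ∈ Ω) (hy : y ∈ Ω) (hz : z ∈ Ω)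
    (hxy : x ≠ y) (hyz : y ≠ z) (hxz : x ≠ z) :
    funkDist Ω x z ≤ funkDist Ω x y + funkDist Ω y z := by
  have hu := mul_div_le_chordSup hopen hconv hbdd hx hy hz hxy hyz hxz
  have h₁ := one_lt_chordSup hopen hbdd hy hxy
  have h₂ := one_lt_chordSup hopen hbdd hz hyz
  rw [funkDist_of_ne hxy, funkDist_of_ne hyz, funkDist_of_ne hxz]
  set T₁ := chordSup Ω x y
  set T₂ := chordSup Ω y z
  set T₃ := chordSup Ω x z
  set u := T₁ * T₂ / (T₁ + T₂ - 1)
  have hD : 0 < T₁ + T₂ - 1 := by linarith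
  have hu₁ : 1 < u := by rw [lt_div_iff₀ hD]; nlinarith
  calc Real.log (T₃ / (T₃ - 1)) ≤ Real.log (u / (u - 1)) := by
        refine Real.log_le_log (div_pos (by linarith) (by linarith)) ?_
        rw [div_le_div_iff₀ (by linarith) (by linarith)]
        nlinarith
    _ = Real.log (T₁ / (T₁ - 1) * (T₂ / (T₂ - 1))) := by
        have hu_sub : u - 1 = (T₁ - 1) * (T₂ - 1) / (T₁ + T₂ - 1) := by
          simp only [u]
          field_simp
          ring
        rw [hu_sub, div_div_div_cancel_right₀ hD.ne', div_mul_div_comm]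
    _ = Real.log (T₁ / (T₁ - 1)) + Real.log (T₂ / (T₂ - 1)) :=
        Real.log_mul (div_pos (by linarith) (by linarith)).ne'
          (div_pos (by linarith) (by linarith)).ne'

theorem funkDist_triangle (hopen : IsOpen Ω) (hconv : Convex ℝ Ω)
    (hbdd : Bornology.IsBounded Ω) (hx : x ∈ Ω) (hy : y ∈ Ω) (hz : z ∈ Ω) :
    funkDist Ω x z ≤ funkDist Ω x y + funkDist Ω y z := by
  by_cases hxy : x = y
  · simp [hxy]
  by_cases hyz : y = z
  · simp [hyz]
  by_cases hxz : x = z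
  · subst hxz
    rw [funkDist_self]
    linarith [funkDist_nonneg hopen hbdd hy (x := x), funkDist_nonneg hopen hbdd hx (x := y)]
  exact funkDist_triangle_of_ne hopen hconv hbdd hx hy hz hxy hyz hxz

theorem hilbertDist_eq_funkDist (hopen : IsOpen Ω) (hbdd : Bornology.IsBounded Ω)
    (hx : x ∈ Ω) (hy : y ∈ Ω) :
    hilbertDist Ω x y = (funkDist Ω x y + funkDist Ω y x) / 2 := by
  by_cases hxy : x = y
  · simp [hilbertDist, hxy]
  have hT := one_lt_chordSup hopen hbdd hy hxy
  have hm := chordInf_neg hopen hbdd hx hxy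
  have hd : 0 < dist x y := dist_pos.2 hxy
  rw [hilbertDist, if_neg hxy, funkDist_of_ne hxy, funkDist_of_ne (Ne.symm hxy),
    chordSup_swap hbdd hx hxy, sub_sub_cancel_left, chordA_eq_lineMap, chordB_eq_lineMap]
  simp only [dist_lineMap_left, dist_lineMap_right, Real.norm_eq_abs]
  set T := chordSup Ω x y
  set m := chordInf Ω x y
  have hT₁ : 0 < T - 1 := by linarith
  have hm₁ : 0 < 1 - m := by linarith
  have hratio : T * dist x y * ((1 - m) * dist x y) / ((T - 1) * dist x y * (-m * dist x y)) =
      T / (T - 1) * ((1 - m) / -m) := by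
    field_simp
  rw [abs_of_pos (by linarith : 0 < T), abs_of_pos hm₁, abs_sub_comm, abs_of_pos hT₁,
    abs_of_neg hm, hratio,
    Real.log_mul (div_pos (by linarith) hT₁).ne' (div_pos hm₁ (neg_pos.2 hm)).ne']
  ring

theorem hilbertDist_comm (hopen : IsOpen Ω) (hbdd : Bornology.IsBounded Ω)
    (hx : x ∈ Ω) (hy : y ∈ Ω) : hilbertDist Ω x y = hilbertDist Ω y x := by
  rw [hilbertDist_eq_funkDist hopen hbdd hx hy, hilbertDist_eq_funkDist hopen hbdd hy hx,
    add_comm]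

theorem hilbertDist_pos (hopen : IsOpen Ω) (hbdd : Bornology.IsBounded Ω)
    (hx : x ∈ Ω) (hy : y ∈ Ω) (hxy : x ≠ y) : 0 < hilbertDist Ω x y := by
  rw [hilbertDist_eq_funkDist hopen hbdd hx hy]
  linarith [funkDist_pos hopen hbdd hy hxy, funkDist_pos hopen hbdd hx (Ne.symm hxy)]

theorem hilbertDist_triangle (hopen : IsOpen Ω) (hconv : Convex ℝ Ω)
    (hbdd : Bornology.IsBounded Ω) (hx : x ∈ Ω) (hy : y ∈ Ω) (hz : z ∈ Ω) :
    hilbertDist Ω x z ≤ hilbertDist Ω x y + hilbertDist Ω y z := by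
  rw [hilbertDist_eq_funkDist hopen hbdd hx hz, hilbertDist_eq_funkDist hopen hbdd hx hy,
    hilbertDist_eq_funkDist hopen hbdd hy hz]
  linarith [funkDist_triangle hopen hconv hbdd hx hy hz,
    funkDist_triangle hopen hconv hbdd hz hy hx]

end

/-- For a bounded open convex `Ω ⊆ ℝⁿ`, the Hilbert distance is a metric
on `Ω`: it vanishes on the diagonal, is symmetric, positive for distinct points, and
satisfies the triangle inequality. -/
theorem stmt_7 (n : ℕ) (Ω : Set (EuclideanSpace ℝ (Fin n)))
    (hopen : IsOpen Ω) (hconv : Convex ℝ Ω) (hbdd : Bornology.IsBounded Ω) :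
    (∀ x ∈ Ω, hilbertDist Ω x x = 0) ∧
    (∀ x ∈ Ω, ∀ y ∈ Ω, hilbertDist Ω x y = hilbertDist Ω y x) ∧
    (∀ x ∈ Ω, ∀ y ∈ Ω, x ≠ y → 0 < hilbertDist Ω x y) ∧
    (∀ x ∈ Ω, ∀ y ∈ Ω, ∀ z ∈ Ω,
      hilbertDist Ω x z ≤ hilbertDist Ω x y + hilbertDist Ω y z) :=
  ⟨fun _ _ => if_pos rfl,
    fun _ hx _ hy => hilbertDist_comm hopen hbdd hx hy,
    fun _ hx _ hy hxy => hilbertDist_pos hopen hbdd hx hy hxy,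
    fun _ hx _ hy _ hz => hilbertDist_triangle hopen hconv hbdd hx hy hz⟩
end
end

section
/- Let Ω be a bounded open convex subset of Euclidean ℝⁿ whose center of mass is the origin. Then there exists a unique centered ellipsoid ℰ (the inertia ellipsoid of Ω) such that for every linear functional ψ : ℝⁿ → ℝ, ∫_Ω ψ(x)² dx = ∫_ℰ ψ(x)² dx. Equivalently, the positive-definite symmetric matrices of second moments M_Ω = ∫_Ω x xᵀ dx and M_ℰ agree. -/
/-!
For a bounded open set `S`, the quadratic form `u ↦ ∫_S ⟪u, x⟫²` is `⟪M_S u, u⟫` for a positive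
definite operator `M_S`. Reflections preserve the unit ball `B` and have `|det| = 1`, so
`∫_B ⟪u, x⟫² = κ ‖u‖²` for some `κ > 0`, and the change of variables formula gives
`M_{A B} = κ |det A| A Aᵀ`. Factoring `M_Ω = C Cᵀ` and rescaling `C` yields an ellipsoid with
`M_{A B} = M_Ω`. Conversely, taking determinants in `κ |det A| A Aᵀ = κ |det A'| A' A'ᵀ` gives
`|det A| = |det A'|`, hence `A Aᵀ = A' A'ᵀ`; then `A'⁻¹ A` is orthogonal and `A B = A' B`.
-/

open MeasureTheory Metric Bornology
open scoped RealInnerProductSpace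

theorem Continuous.integrableOn_of_isBounded {X F : Type*} [MetricSpace X] [ProperSpace X]
    [MeasurableSpace X] [OpensMeasurableSpace X] {μ : Measure X} [IsFiniteMeasureOnCompacts μ]
    [NormedAddCommGroup F] {f : X → F} (hf : Continuous f) {S : Set X} (hS : IsBounded S) :
    IntegrableOn f S μ :=
  (hf.continuousOn.integrableOn_compact hS.isCompact_closure).mono_set subset_closure

theorem setIntegral_image_linearEquiv {E F : Type*} [NormedAddCommGroup E] [NormedSpace ℝ E]
    [FiniteDimensional ℝ E] [MeasurableSpace E] [BorelSpace E] (μ : Measure E)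
    [μ.IsAddHaarMeasure] [NormedAddCommGroup F] [NormedSpace ℝ F]
    (A : E ≃ₗ[ℝ] E) (S : Set E) (g : E → F) :
    ∫ x in A '' S, g x ∂μ = |LinearMap.det (A : E →ₗ[ℝ] E)| • ∫ x in S, g (A x) ∂μ := by
  have hdet : LinearMap.det (A : E →ₗ[ℝ] E) ≠ 0 := A.isUnit_det'.ne_zero
  have hmap_eq := Measure.map_linearMap_addHaar_eq_smul_addHaar μ hdet
  rw [LinearEquiv.coe_coe] at hmap_eq
  have hemb : MeasurableEmbedding A := A.toContinuousLinearEquiv.toHomeomorph.measurableEmbedding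
  have hmap := hemb.setIntegral_map (μ := μ) g (A '' S)
  rw [Set.preimage_image_eq S A.injective, hmap_eq, Measure.restrict_smul, integral_smul_measure,
    ENNReal.toReal_ofReal (abs_nonneg _)] at hmap
  rw [← hmap, smul_smul, abs_inv, mul_inv_cancel₀ (abs_ne_zero.mpr hdet), one_smul]

namespace LinearMap

variable {𝕜 E : Type*} [RCLike 𝕜] [NormedAddCommGroup E] [InnerProductSpace 𝕜 E]

theorem IsSymmetric.eq_of_inner_map_self_eq {T T' : E →ₗ[𝕜] E} (hT : T.IsSymmetric)
    (hT' : T'.IsSymmetric) (h : ∀ x, inner 𝕜 (T x) x = inner 𝕜 (T' x) x) : T = T' :=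
  sub_eq_zero.mp <| (hT.sub hT').inner_map_self_eq_zero.mp fun x => by
    rw [sub_apply, inner_sub_left, h, sub_self]

variable [FiniteDimensional 𝕜 E]

theorem det_adjoint (A : E →ₗ[𝕜] E) : LinearMap.det (adjoint A) = star (LinearMap.det A) := by
  let b := stdOrthonormalBasis 𝕜 E
  rw [← det_toMatrix b.toBasis, ← det_toMatrix b.toBasis, toMatrix_adjoint,
    Matrix.det_conjTranspose]

open scoped MatrixOrder in
theorem IsPositive.exists_eq_mul_star {T : E →ₗ[𝕜] E} (hT : T.IsPositive) :
    ∃ C, T = C * star C := by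
  let Φ := toMatrixOrthonormal (stdOrthonormalBasis 𝕜 E)
  obtain ⟨X, hX⟩ := CStarAlgebra.nonneg_iff_eq_mul_star_self.mp
    ((posSemidef_toMatrix_iff (stdOrthonormalBasis 𝕜 E)).mpr hT).nonneg
  have hΦ : Φ T = X * star X := hX
  refine ⟨Φ.symm X, ?_⟩
  rw [← map_star, ← map_mul, ← hΦ, StarAlgEquiv.symm_apply_apply]

end LinearMap

section SecondMoments

variable {E : Type*} [NormedAddCommGroup E] [InnerProductSpace ℝ E] [FiniteDimensional ℝ E]
  [MeasurableSpace E] [BorelSpace E] {μ : Measure E} [μ.IsAddHaarMeasure]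

theorem integral_inner_sq_pos {S : Set E} (hSo : IsOpen S) (hSb : IsBounded S) (hS : S.Nonempty)
    {u : E} (hu : u ≠ 0) : 0 < ∫ x in S, ⟪u, x⟫ ^ 2 ∂μ := by
  have hint : IntegrableOn (fun x => ⟪u, x⟫ ^ 2) S μ :=
    (by fun_prop : Continuous fun x => ⟪u, x⟫ ^ 2).integrableOn_of_isBounded hSb
  rw [setIntegral_pos_iff_support_of_nonneg_ae (ae_of_all _ fun x => sq_nonneg _) hint]
  have hK : (ℝ ∙ u)ᗮ ≠ ⊤ := fun h =>
    hu (inner_self_eq_zero.mp (Submodule.mem_orthogonal_singleton_iff_inner_right.mp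
      (h ▸ Submodule.mem_top)))
  have hnull : μ (Function.support fun x => ⟪u, x⟫ ^ 2)ᶜ = 0 := by
    refine measure_mono_null (fun x hx => ?_) (Measure.addHaar_submodule μ _ hK)
    simpa [Submodule.mem_orthogonal_singleton_iff_inner_right] using hx
  rw [Set.inter_comm, measure_inter_conull hnull]
  exact hSo.measure_pos μ hS

theorem integral_inner_sq_image_linearEquiv (A : E ≃ₗ[ℝ] E) (S : Set E) (u : E) :
    ∫ x in A '' S, ⟪u, x⟫ ^ 2 ∂μ = |LinearMap.det (A : E →ₗ[ℝ] E)| *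
      ∫ x in S, ⟪LinearMap.adjoint (A : E →ₗ[ℝ] E) u, x⟫ ^ 2 ∂μ := by
  simp [setIntegral_image_linearEquiv, LinearMap.adjoint_inner_left]

theorem integral_inner_sq_ball_eq_of_norm_eq {u v : E} (h : ‖u‖ = ‖v‖) :
    ∫ x in ball 0 1, ⟪u, x⟫ ^ 2 ∂μ = ∫ x in ball 0 1, ⟪v, x⟫ ^ 2 ∂μ := by
  set R := (ℝ ∙ (u - v))ᗮ.reflection
  have hRu : R u = v := Submodule.reflection_sub h
  have hball : R.toLinearEquiv '' ball 0 1 = ball 0 1 := by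
    simp [R.image_ball 0 1]
  have hdet : |LinearMap.det (R.toLinearEquiv : E →ₗ[ℝ] E)| = 1 := by
    rw [show (R.toLinearEquiv : E →ₗ[ℝ] E) = R.toLinearMap from rfl, Submodule.det_reflection]
    simp
  calc ∫ x in ball 0 1, ⟪u, x⟫ ^ 2 ∂μ = ∫ x in R.toLinearEquiv '' ball 0 1, ⟪u, x⟫ ^ 2 ∂μ := by
        rw [hball]
    _ = ∫ x in ball 0 1, ⟪u, R x⟫ ^ 2 ∂μ := by
        rw [setIntegral_image_linearEquiv, hdet, one_smul]
        rfl
    _ = ∫ x in ball 0 1, ⟪v, x⟫ ^ 2 ∂μ := by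
        congr 1 with x
        rw [← hRu, ← R.inner_map_map u (R x), Submodule.reflection_reflection]

variable (μ) in
theorem exists_integral_inner_sq_ball :
    ∃ κ > 0, ∀ u : E, ∫ x in ball 0 1, ⟪u, x⟫ ^ 2 ∂μ = κ * ‖u‖ ^ 2 := by
  rcases subsingleton_or_nontrivial E with hE | hE
  · exact ⟨1, one_pos, fun u => by simp [Subsingleton.elim u 0]⟩
  obtain ⟨e, he⟩ := exists_norm_eq E zero_le_one
  refine ⟨∫ x in ball 0 1, ⟪e, x⟫ ^ 2 ∂μ, integral_inner_sq_pos isOpen_ball isBounded_ball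
    (nonempty_ball.mpr one_pos) (norm_ne_zero_iff.mp (he ▸ one_ne_zero)), fun u => ?_⟩
  have hnorm : ‖u‖ = ‖‖u‖ • e‖ := by simp [norm_smul, he]
  rw [integral_inner_sq_ball_eq_of_norm_eq hnorm]
  simp_rw [inner_smul_left, mul_pow, integral_const_mul]
  simp [mul_comm]

theorem integral_inner_sq_image_ball {κ : ℝ}
    (hκ : ∀ u : E, ∫ x in ball 0 1, ⟪u, x⟫ ^ 2 ∂μ = κ * ‖u‖ ^ 2) (A : E ≃ₗ[ℝ] E) (u : E) :
    ∫ x in A '' ball 0 1, ⟪u, x⟫ ^ 2 ∂μ =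
      ⟪((κ * |LinearMap.det (A : E →ₗ[ℝ] E)|) •
        ((A : E →ₗ[ℝ] E) * star (A : E →ₗ[ℝ] E))) u, u⟫ := by
  rw [integral_inner_sq_image_linearEquiv, hκ, LinearMap.smul_apply, Module.End.mul_apply,
    real_inner_smul_left, LinearMap.star_eq_adjoint, ← LinearMap.adjoint_inner_right,
    real_inner_self_eq_norm_sq]
  ring

/-- The inertia matrix `∫_S x xᵀ dx` of `S`, as an operator. -/
noncomputable def inertiaOperator (μ : Measure E) (S : Set E) : E →ₗ[ℝ] E :=
  ((∫ x in S, InnerProductSpace.rankOne ℝ x x ∂μ : E →L[ℝ] E) : E →ₗ[ℝ] E)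

theorem inner_inertiaOperator {S : Set E} (hS : IsBounded S) (u v : E) :
    ⟪inertiaOperator μ S u, v⟫ = ∫ x in S, ⟪u, x⟫ * ⟪v, x⟫ ∂μ := by
  have hint : IntegrableOn (fun x => InnerProductSpace.rankOne ℝ x x) S μ :=
    ((InnerProductSpace.rankOne ℝ).continuous.clm_apply continuous_id).integrableOn_of_isBounded hS
  rw [inertiaOperator, ContinuousLinearMap.coe_coe, ContinuousLinearMap.integral_apply hint,
    real_inner_comm, ← integral_inner (hint.apply_continuousLinearMap u)]
  simp [inner_smul_right, real_inner_comm]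

theorem inner_inertiaOperator_self {S : Set E} (hS : IsBounded S) (u : E) :
    ⟪inertiaOperator μ S u, u⟫ = ∫ x in S, ⟪u, x⟫ ^ 2 ∂μ := by
  simp_rw [inner_inertiaOperator hS, sq]

theorem isPositive_inertiaOperator {S : Set E} (hS : IsBounded S) :
    (inertiaOperator μ S).IsPositive := by
  refine ⟨fun u v => ?_, fun u => ?_⟩
  · rw [inner_inertiaOperator hS, real_inner_comm, inner_inertiaOperator hS]
    simp_rw [mul_comm]
  · rw [RCLike.re_to_real, inner_inertiaOperator_self hS]
    exact integral_nonneg fun x => sq_nonneg _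

theorem injective_inertiaOperator {S : Set E} (hSo : IsOpen S) (hSb : IsBounded S)
    (hS : S.Nonempty) : Function.Injective (inertiaOperator μ S) := by
  refine (injective_iff_map_eq_zero _).mpr fun u hu => ?_
  by_contra hu0
  have hpos := integral_inner_sq_pos (μ := μ) hSo hSb hS hu0
  rw [← inner_inertiaOperator_self hSb, hu, inner_zero_left] at hpos
  exact lt_irrefl 0 hpos

end SecondMoments

section Ellipsoid

variable {E : Type*} [NormedAddCommGroup E] [InnerProductSpace ℝ E] [FiniteDimensional ℝ E]

theorem isSymmetric_smul_mul_star (c : ℝ) (A : E →ₗ[ℝ] E) : (c • (A * star A)).IsSymmetric :=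
  (LinearMap.isSymmetric_self_comp_adjoint A).smul (conj_trivial c)

theorem exists_linearEquiv_smul_mul_star_eq {κ : ℝ} (hκ : 0 < κ) {T : E →ₗ[ℝ] E}
    (hT : T.IsPositive) (hTi : Function.Injective T) :
    ∃ A : E ≃ₗ[ℝ] E,
      (κ * |LinearMap.det (A : E →ₗ[ℝ] E)|) • ((A : E →ₗ[ℝ] E) * star (A : E →ₗ[ℝ] E)) = T := by
  obtain ⟨C, rfl⟩ := hT.exists_eq_mul_star
  have hCs : Function.Surjective C := fun y => by
    obtain ⟨x, hx⟩ := LinearMap.injective_iff_surjective.mp hTi y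
    exact ⟨star C x, hx⟩
  let C' := LinearEquiv.ofBijective C ⟨LinearMap.injective_iff_surjective.mpr hCs, hCs⟩
  have hc : 0 < κ * |LinearMap.det C| := mul_pos hκ (abs_pos.mpr C'.isUnit_det'.ne_zero)
  set d := Module.finrank ℝ E
  -- `A = t • C` works once `t ^ (d + 2) * κ * |det C| = 1`.
  set t := (κ * |LinearMap.det C|)⁻¹ ^ ((d + 2 : ℕ) : ℝ)⁻¹
  have ht : 0 < t := by positivity
  have htd : t ^ (d + 2) = (κ * |LinearMap.det C|)⁻¹ :=
    Real.rpow_inv_natCast_pow (inv_nonneg.mpr hc.le) (by omega)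
  refine ⟨C'.trans (LinearEquiv.smulOfNeZero ℝ E t ht.ne'), ?_⟩
  have hA : ((C'.trans (LinearEquiv.smulOfNeZero ℝ E t ht.ne') : E ≃ₗ[ℝ] E) : E →ₗ[ℝ] E) =
      t • C :=
    LinearMap.ext fun x => rfl
  rw [hA, LinearMap.det_smul, abs_mul, abs_pow, abs_of_pos ht, star_smul, smul_mul_smul_comm,
    smul_smul, star_trivial]
  convert one_smul ℝ (C * star C)
  rw [← mul_inv_cancel₀ hc.ne', ← htd]
  ring

theorem abs_det_eq_of_smul_mul_star_eq {κ : ℝ} (hκ : 0 < κ) {A A' : E →ₗ[ℝ] E}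
    (h : (κ * |LinearMap.det A|) • (A * star A) = (κ * |LinearMap.det A'|) • (A' * star A')) :
    |LinearMap.det A| = |LinearMap.det A'| := by
  have hdet_eq : ∀ B : E →ₗ[ℝ] E, LinearMap.det ((κ * |LinearMap.det B|) • (B * star B)) =
      κ ^ Module.finrank ℝ E * |LinearMap.det B| ^ (Module.finrank ℝ E + 2) := fun B => by
    rw [LinearMap.det_smul, map_mul, LinearMap.star_eq_adjoint, LinearMap.det_adjoint,
      star_trivial, ← abs_mul_abs_self]
    ring
  have hdet := congrArg LinearMap.det h
  rw [hdet_eq, hdet_eq, mul_right_inj' (pow_ne_zero _ hκ.ne')] at hdet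
  exact (pow_left_inj₀ (abs_nonneg _) (abs_nonneg _) (by omega)).mp hdet

theorem image_ball_subset_of_mul_star_eq {A A' : E ≃ₗ[ℝ] E}
    (h : (A : E →ₗ[ℝ] E) * star (A : E →ₗ[ℝ] E) = (A' : E →ₗ[ℝ] E) * star (A' : E →ₗ[ℝ] E)) :
    A '' ball 0 1 ⊆ A' '' ball 0 1 := by
  set W : E →ₗ[ℝ] E := (A'.symm : E →ₗ[ℝ] E) * A
  have hinv : (A'.symm : E →ₗ[ℝ] E) * A' = 1 := LinearMap.ext fun x => by simp
  have hW : W * star W = 1 :=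
    calc W * star W = A'.symm * ((A : E →ₗ[ℝ] E) * star (A : E →ₗ[ℝ] E)) *
          star (A'.symm : E →ₗ[ℝ] E) := by
          simp only [W, star_mul, mul_assoc]
      _ = (A'.symm * A' : E →ₗ[ℝ] E) * star (A'.symm * A' : E →ₗ[ℝ] E) := by
          rw [h]
          simp only [star_mul, mul_assoc]
      _ = 1 := by rw [hinv, star_one, one_mul]
  have hnorm : ∀ x, ‖W x‖ = ‖x‖ := fun x => by
    rw [← sq_eq_sq₀ (norm_nonneg _) (norm_nonneg _), ← real_inner_self_eq_norm_sq,
      ← real_inner_self_eq_norm_sq, ← LinearMap.adjoint_inner_left, ← LinearMap.star_eq_adjoint,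
      ← Module.End.mul_apply, mul_eq_one_comm.mp hW, Module.End.one_apply]
  rintro _ ⟨x, hx, rfl⟩
  refine ⟨W x, ?_, by simp [W]⟩
  rwa [mem_ball_zero_iff, hnorm, ← mem_ball_zero_iff]

theorem image_ball_eq_of_smul_mul_star_eq {κ : ℝ} (hκ : 0 < κ) {A A' : E ≃ₗ[ℝ] E}
    (h : (κ * |LinearMap.det (A : E →ₗ[ℝ] E)|) • ((A : E →ₗ[ℝ] E) * star (A : E →ₗ[ℝ] E)) =
      (κ * |LinearMap.det (A' : E →ₗ[ℝ] E)|) • ((A' : E →ₗ[ℝ] E) * star (A' : E →ₗ[ℝ] E))) :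
    A '' ball 0 1 = A' '' ball 0 1 := by
  rw [abs_det_eq_of_smul_mul_star_eq hκ h] at h
  have hc : κ * |LinearMap.det (A' : E →ₗ[ℝ] E)| ≠ 0 :=
    mul_ne_zero hκ.ne' (abs_ne_zero.mpr A'.isUnit_det'.ne_zero)
  have h' := smul_right_injective (E →ₗ[ℝ] E) hc h
  exact (image_ball_subset_of_mul_star_eq h').antisymm (image_ball_subset_of_mul_star_eq h'.symm)

end Ellipsoid

theorem existsUnique_image_ball_integral_inner_sq_eq {E : Type*} [NormedAddCommGroup E]
    [InnerProductSpace ℝ E] [FiniteDimensional ℝ E] [MeasurableSpace E] [BorelSpace E]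
    (μ : Measure E) [μ.IsAddHaarMeasure] {Ω : Set E} (hΩo : IsOpen Ω) (hΩb : IsBounded Ω)
    (hΩ : Ω.Nonempty) :
    ∃! ℰ : Set E, (∃ A : E ≃ₗ[ℝ] E, ℰ = A '' ball 0 1) ∧
      ∀ u : E, ∫ x in Ω, ⟪u, x⟫ ^ 2 ∂μ = ∫ x in ℰ, ⟪u, x⟫ ^ 2 ∂μ := by
  obtain ⟨κ, hκ, hball⟩ := exists_integral_inner_sq_ball μ
  obtain ⟨A, hA⟩ := exists_linearEquiv_smul_mul_star_eq hκ
    (isPositive_inertiaOperator (μ := μ) hΩb) (injective_inertiaOperator hΩo hΩb hΩ)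
  refine ⟨A '' ball 0 1, ⟨⟨A, rfl⟩, fun u => ?_⟩, ?_⟩
  · rw [integral_inner_sq_image_ball hball, hA, inner_inertiaOperator_self hΩb]
  rintro _ ⟨⟨A', rfl⟩, hA'⟩
  refine image_ball_eq_of_smul_mul_star_eq hκ <|
    (isSymmetric_smul_mul_star _ _).eq_of_inner_map_self_eq (isSymmetric_smul_mul_star _ _)
      fun u => ?_
  rw [← integral_inner_sq_image_ball hball, ← hA', ← inner_inertiaOperator_self hΩb, hA]

theorem stmt_9_general (n : ℕ) (Ω : Set (EuclideanSpace ℝ (Fin n)))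
    (hopen : IsOpen Ω) (hbdd : Bornology.IsBounded Ω)
    (hne : Ω.Nonempty) :
    ∃! ℰ : Set (EuclideanSpace ℝ (Fin n)),
      (∃ A : EuclideanSpace ℝ (Fin n) ≃ₗ[ℝ] EuclideanSpace ℝ (Fin n),
        ℰ = A '' ball 0 1) ∧
      ∀ ψ : EuclideanSpace ℝ (Fin n) →ₗ[ℝ] ℝ,
        ∫ x in Ω, (ψ x) ^ 2 = ∫ x in ℰ, (ψ x) ^ 2 := by
  obtain ⟨ℰ, ⟨hℰ, hmoment⟩, huniq⟩ :=
    existsUnique_image_ball_integral_inner_sq_eq volume hopen hbdd hne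
  refine ⟨ℰ, ⟨hℰ, fun ψ => ?_⟩, fun ℰ' ⟨hℰ', hmoment'⟩ =>
    huniq ℰ' ⟨hℰ', fun u => hmoment' (innerₛₗ ℝ u)⟩⟩
  have hψ : ∀ x, ψ x = ⟪(InnerProductSpace.toDual ℝ _).symm ψ.toContinuousLinearMap, x⟫ :=
    fun x => by rw [InnerProductSpace.toDual_symm_apply]; rfl
  simp_rw [hψ]
  exact hmoment _

/-- Let `Ω ⊆ ℝⁿ` be a bounded open convex set with center of mass the
origin. Then there is a unique centered ellipsoid `ℰ` (the inertia ellipsoid of `Ω`) such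
that `∫_Ω ψ(x)² dx = ∫_ℰ ψ(x)² dx` for every linear functional `ψ`. -/
theorem stmt_9 (n : ℕ) (hn : 1 ≤ n) (Ω : Set (EuclideanSpace ℝ (Fin n)))
    (hopen : IsOpen Ω) (hconv : Convex ℝ Ω) (hbdd : Bornology.IsBounded Ω)
    (hne : Ω.Nonempty) (hbary : ∫ x in Ω, x = 0) :
    ∃! ℰ : Set (EuclideanSpace ℝ (Fin n)),
      (∃ A : EuclideanSpace ℝ (Fin n) ≃ₗ[ℝ] EuclideanSpace ℝ (Fin n),
        ℰ = A '' ball 0 1) ∧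
      ∀ ψ : EuclideanSpace ℝ (Fin n) →ₗ[ℝ] ℝ,
        ∫ x in Ω, (ψ x) ^ 2 = ∫ x in ℰ, (ψ x) ^ 2 :=
  stmt_9_general n Ω hopen hbdd hne
end
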